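/- arXiv:cs/0105034 — 3 statements merged into one kernel-verified Lean document; each statement's English description precedes it below -/
import Mathlib

section
/- For N = 2^n with n ≥ 1 and all integers i with 0 < i < N, S(i,N) ≤ m(N), where m(N) = (4N - (-1)^n - 3)/6. -/
/-- Number of dimension-`k` links crossing intercolumn position `i`
(least nonnegative residue mod `2^k`). -/
def f (i : ℤ) (k : ℕ) : ℤ := (i * (1 - 2 * (((i - 1) / 2 ^ (k - 1)) % 2))) % 2 ^ k

/-- Total wire density at intercolumn position `i` for `N = 2^n`. -/
def S (i : ℤ) (n : ℕ) : ℤ := ∑ k ∈ Finset.Icc 1 n, f i k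

/-- The `j`-th binary digit of `i`, counting from 1 at the right. -/
def b (i : ℤ) (j : ℕ) : ℤ := (i / 2 ^ (j - 1)) % 2

/-- Excess of 1's over 0's among bit positions `j+1, ..., n` of `i`. -/
def e (i : ℤ) (j n : ℕ) : ℤ := ∑ l ∈ Finset.Icc (j + 1) n, (2 * b i l - 1)

/-- Maximum wire density `m(N)` for `N = 2^n`. -/
def m (n : ℕ) : ℤ := (4 * 2 ^ n - (-1) ^ n - 3) / 6

/-- Leftmost maximizing position `p(N)` for `N = 2^n`. -/
def p (n : ℕ) : ℤ := (2 ^ n - (-1) ^ n) / 3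

/-- Closed form for `f`: distance to the nearest multiple of `2^k`. -/
def g (i : ℤ) (k : ℕ) : ℤ := min (i % 2 ^ k) (2 ^ k - i % 2 ^ k)

lemma f_eq_g (i : ℤ) (k : ℕ) (hk : 1 ≤ k) : f i k = g i k := by
  obtain ⟨j, rfl⟩ : ∃ j, k = j + 1 := ⟨k - 1, by omega⟩
  have hP : (0:ℤ) < 2 ^ j := by positivity
  set P : ℤ := 2 ^ j with hPdef
  have hpow : (2:ℤ) ^ (j + 1) = 2 * P := by rw [pow_succ]; ring
  have hr0 : 0 ≤ (i - 1) % (2 * P) := Int.emod_nonneg _ (by positivity)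
  have hr1 : (i - 1) % (2 * P) < 2 * P := Int.emod_lt_of_pos _ (by positivity)
  set r : ℤ := (i - 1) % (2 * P) with hrdef
  have hq : i - 1 = 2 * P * ((i - 1) / (2 * P)) + r := (Int.mul_ediv_add_emod _ _).symm
  set q : ℤ := (i - 1) / (2 * P) with hqdef
  have hbit : (i - 1) / P = r / P + 2 * q := by
    have : i - 1 = r + P * (2 * q) := by linarith
    rw [this, Int.add_mul_ediv_left _ _ (ne_of_gt hP)]
  have hi : i = (r + 1) + 2 * P * q := by linarith
  rcases lt_or_ge r P with hcase | hcase
  · -- low half: sign bit is 0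
    have hdiv : r / P = 0 := Int.ediv_eq_zero_of_lt hr0 hcase
    have hb : ((i - 1) / P) % 2 = 0 := by
      rw [hbit, hdiv, zero_add, mul_comm, Int.mul_emod_left]
    have hmod : i % (2 * P) = r + 1 := by
      rw [hi, Int.add_mul_emod_self_left, Int.emod_eq_of_lt (by omega) (by omega)]
    show (i * (1 - 2 * (((i - 1) / 2 ^ (j + 1 - 1)) % 2))) % 2 ^ (j+1)
        = min (i % 2 ^ (j+1)) (2 ^ (j+1) - i % 2 ^ (j+1))
    have hj1 : j + 1 - 1 = j := rfl
    rw [hj1, hpow]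
    rw [show ((i - 1) / P) % 2 = 0 from hb]
    rw [hmod]
    rw [show i * (1 - 2 * 0) = i by ring, hmod]
    omega
  · -- high half: sign bit is 1
    have hdiv : r / P = 1 := by
      have : r = (r - P) + P * 1 := by ring
      rw [this, Int.add_mul_ediv_left _ _ (ne_of_gt hP),
        Int.ediv_eq_zero_of_lt (by omega) (by omega)]
      omega
    have hb : ((i - 1) / P) % 2 = 1 := by
      rw [hbit, hdiv]; omega
    have hmod : i % (2 * P) = (r + 1) % (2 * P) := by
      rw [hi, Int.add_mul_emod_self_left]
    have hneg : (-i) % (2 * P) = (2 * P - (r + 1)) % (2 * P) := by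
      have : -i = (2 * P - (r + 1)) + 2 * P * (-q - 1) := by linarith
      rw [this, Int.add_mul_emod_self_left]
    show (i * (1 - 2 * (((i - 1) / 2 ^ (j + 1 - 1)) % 2))) % 2 ^ (j+1)
        = min (i % 2 ^ (j+1)) (2 ^ (j+1) - i % 2 ^ (j+1))
    have hj1 : j + 1 - 1 = j := rfl
    rw [hj1, hpow]
    rw [show ((i - 1) / P) % 2 = 1 from hb]
    rw [show i * (1 - 2 * 1) = -i by ring]
    rw [hneg, hmod]
    rcases eq_or_lt_of_le (show r + 1 ≤ 2 * P by omega) with heq | hlt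
    · rw [← heq]
      simp [Int.emod_self]
      omega
    · rw [Int.emod_eq_of_lt (by omega) hlt, Int.emod_eq_of_lt (by omega) (by omega)]
      omega

lemma g_even (i : ℤ) (k : ℕ) : g (2 * i) (k + 1) = 2 * g i k := by
  have hP : (0:ℤ) < 2 ^ k := by positivity
  have h1 : (2 * i) % 2 ^ (k + 1) = 2 * (i % 2 ^ k) := by
    rw [pow_succ, mul_comm ((2:ℤ) ^ k) 2]
    exact Int.mul_emod_mul_of_pos _ _ (by norm_num)
  have h2 : 0 ≤ i % 2 ^ k := Int.emod_nonneg _ (ne_of_gt hP)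
  have h3 : i % 2 ^ k < 2 ^ k := Int.emod_lt_of_pos _ hP
  unfold g
  rw [h1, pow_succ]
  generalize (2:ℤ) ^ k = P at *
  omega

lemma g_odd (i : ℤ) (k : ℕ) (hk : 1 ≤ k) : g (2 * i + 1) (k + 1) = g i k + g (i + 1) k := by
  obtain ⟨l, rfl⟩ : ∃ l, k = l + 1 := ⟨k - 1, by omega⟩
  have hQ : (0:ℤ) < 2 ^ l := by positivity
  set Q : ℤ := 2 ^ l with hQdef
  have hPQ : (2:ℤ) ^ (l + 1) = 2 * Q := by rw [pow_succ]; ring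
  have hP2Q : (2:ℤ) ^ (l + 1 + 1) = 4 * Q := by rw [pow_succ, pow_succ]; ring
  have h2 : 0 ≤ i % (2 * Q) := Int.emod_nonneg _ (by positivity)
  have h3 : i % (2 * Q) < 2 * Q := Int.emod_lt_of_pos _ (by positivity)
  set r : ℤ := i % (2 * Q) with hrdef
  have hq : i = 2 * Q * (i / (2 * Q)) + r := (Int.mul_ediv_add_emod _ _).symm
  set q : ℤ := i / (2 * Q) with hqdef
  have h1 : (2 * i + 1) % (4 * Q) = 2 * r + 1 := by
    have : 2 * i + 1 = (2 * r + 1) + 4 * Q * q := by linarith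
    rw [this, Int.add_mul_emod_self_left, Int.emod_eq_of_lt (by omega) (by omega)]
  have hs : (i + 1) % (2 * Q) = r + 1 ∨ (r = 2 * Q - 1 ∧ (i + 1) % (2 * Q) = 0) := by
    have hi1 : i + 1 = (r + 1) + 2 * Q * q := by linarith
    rcases eq_or_lt_of_le (show r + 1 ≤ 2 * Q by omega) with heq | hlt
    · right
      refine ⟨by omega, ?_⟩
      rw [hi1, Int.add_mul_emod_self_left, ← heq, Int.emod_self]
    · left
      rw [hi1, Int.add_mul_emod_self_left, Int.emod_eq_of_lt (by omega) hlt]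
  unfold g
  rw [hP2Q, hPQ, h1]
  rw [← hrdef]
  generalize (i + 1) % (2 * Q) = s at hs
  omega

lemma f_one_even (j : ℤ) : f (2 * j) 1 = 0 := by
  have h1 : (2 * j - 1) % 2 = 1 := by omega
  simp only [f, Nat.sub_self, pow_zero, Int.ediv_one, pow_one, h1]
  have : 2 * j * (1 - 2 * 1) = -(2 * j) := by ring
  rw [this]
  omega

lemma f_one_odd (j : ℤ) : f (2 * j + 1) 1 = 1 := by
  have h1 : (2 * j + 1 - 1) % 2 = 0 := by omega
  simp only [f, Nat.sub_self, pow_zero, Int.ediv_one, pow_one, h1]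
  have : (2 * j + 1) * (1 - 2 * 0) = 2 * j + 1 := by ring
  rw [this]
  omega

lemma S_eq (i : ℤ) (n : ℕ) : S i n = ∑ j ∈ Finset.range n, f i (j + 1) := by
  induction n with
  | zero => simp [S]
  | succ n ih =>
    rw [S, Finset.sum_Icc_succ_top (by omega), ← S, ih, Finset.sum_range_succ]

lemma S_succ2 (i : ℤ) (n : ℕ) :
    S i (n + 1) = (∑ j ∈ Finset.range n, f i (j + 2)) + f i 1 := by
  rw [S_eq, Finset.sum_range_succ']

lemma S_even (i : ℤ) (n : ℕ) : S (2 * i) (n + 1) = 2 * S i n := by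
  rw [S_succ2, f_one_even, add_zero, S_eq, Finset.mul_sum]
  refine Finset.sum_congr rfl fun j _ => ?_
  rw [f_eq_g _ (j + 2) (by omega), f_eq_g _ (j + 1) (by omega)]
  exact g_even i (j + 1)

lemma S_odd (i : ℤ) (n : ℕ) : S (2 * i + 1) (n + 1) = S i n + S (i + 1) n + 1 := by
  rw [S_succ2, f_one_odd, S_eq, S_eq, ← Finset.sum_add_distrib]
  congr 1
  refine Finset.sum_congr rfl fun j _ => ?_
  rw [f_eq_g _ (j + 2) (by omega), f_eq_g _ (j + 1) (by omega), f_eq_g _ (j + 1) (by omega)]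
  exact g_odd i (j + 1) (by omega)

lemma m_dvd (n : ℕ) : (6:ℤ) ∣ 4 * 2 ^ n - (-1) ^ n - 3 := by
  induction n with
  | zero => norm_num
  | succ n ih =>
    obtain ⟨c, hc⟩ := ih
    have hE : ((-1:ℤ)) ^ (n + 1) = -(-1) ^ n := by rw [pow_succ]; ring
    have hp : (2:ℤ) ^ (n + 1) = 2 * 2 ^ n := by rw [pow_succ]; ring
    have hEpm : ((-1:ℤ)) ^ n = 1 ∨ ((-1:ℤ)) ^ n = -1 := by
      rcases Nat.even_or_odd n with h | h
      · exact Or.inl h.neg_one_pow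
      · exact Or.inr h.neg_one_pow
    rw [hE, hp]
    rcases hEpm with h | h <;> rw [h] at hc ⊢
    · exact ⟨2 * c + 1, by linarith⟩
    · exact ⟨2 * c, by linarith⟩

lemma m_six (n : ℕ) : 6 * m n = 4 * 2 ^ n - (-1) ^ n - 3 :=
  Int.mul_ediv_cancel' (m_dvd n)

lemma S_zero (i : ℤ) : S i 0 = 0 := by simp [S]

lemma main_bound : ∀ n : ℕ,
    (∀ i : ℤ, 0 ≤ i → i ≤ 2 ^ n → S i n ≤ m n) ∧
    (∀ i : ℤ, 0 ≤ i → i < 2 ^ n → S i n + S (i + 1) n ≤ m (n + 1) - 1) := by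
  intro n
  induction n with
  | zero =>
    constructor
    · intro i h0 h1
      rw [S_zero]
      norm_num [m]
    · intro i h0 h1
      rw [S_zero, S_zero]
      norm_num [m]
  | succ n ih =>
    obtain ⟨ihA, ihB⟩ := ih
    have hpow : (2:ℤ) ^ (n + 1) = 2 * 2 ^ n := by rw [pow_succ]; ring
    have hm1 := m_six n
    have hm2 := m_six (n + 1)
    have hm3 := m_six (n + 1 + 1)
    have hE : ((-1:ℤ)) ^ (n + 1) = -(-1) ^ n := by rw [pow_succ]; ring
    have hE2 : ((-1:ℤ)) ^ (n + 1 + 1) = (-1) ^ n := by rw [pow_succ, pow_succ]; ring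
    have hEpm : ((-1:ℤ)) ^ n = 1 ∨ ((-1:ℤ)) ^ n = -1 := by
      rcases Nat.even_or_odd n with h | h
      · exact Or.inl h.neg_one_pow
      · exact Or.inr h.neg_one_pow
    have hp1 : (2:ℤ) ^ (n + 1) = 2 * 2 ^ n := hpow
    have hp2 : (2:ℤ) ^ (n + 1 + 1) = 4 * 2 ^ n := by rw [pow_succ, pow_succ]; ring
    rw [hE] at hm2
    rw [hE2] at hm3
    rw [hp1] at hm2
    rw [hp2] at hm3
    constructor
    · intro i h0 h1
      rcases Int.even_or_odd i with ⟨j, hj⟩ | ⟨j, hj⟩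
      · have hij : i = 2 * j := by omega
        subst hij
        rw [S_even]
        have := ihA j (by omega) (by omega)
        omega
      · subst hj
        rw [S_odd]
        have := ihB j (by omega) (by omega)
        omega
    · intro i h0 h1
      rcases Int.even_or_odd i with ⟨j, hj⟩ | ⟨j, hj⟩
      · have hij : i = 2 * j := by omega
        subst hij
        rw [S_even, show 2 * j + 1 = 2 * j + 1 from rfl, S_odd]
        have hA := ihA j (by omega) (by omega)
        have hB := ihB j (by omega) (by omega)
        omega
      · subst hj
        rw [S_odd, show 2 * j + 1 + 1 = 2 * (j + 1) by ring, S_even]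
        have hA := ihA (j + 1) (by omega) (by omega)
        have hB := ihB j (by omega) (by omega)
        omega

theorem S_le_m (n : ℕ) (hn : 1 ≤ n) (i : ℤ) (hi0 : 0 < i) (hiN : i < 2 ^ n) :
    S i n ≤ m n :=
  (main_bound n).1 i (by omega) (by omega)
end

section
/- For N = 2^n with n odd, n ≥ 1, an integer i with 0 < i < N satisfies S(i,N) = m(N) if and only if, reading the n-bit binary representation of i from the left, the first n-1 bits consist of consecutive pairs each equal to 01 or 10, and the final (rightmost) bit is 1. -/
lemma ediv_emod_congr (P x t : ℤ) (hP : 0 < P) : ((x + 2 * P * t) / P) % 2 = (x / P) % 2 := by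
  have h : x + 2 * P * t = x + P * (2 * t) := by ring
  rw [h, Int.add_mul_ediv_left _ _ (ne_of_gt hP)]
  generalize x / P = y
  omega

lemma f_aux (P r : ℤ) (hP : 0 < P) (hr0 : 0 ≤ r) (hr : r < 2 * P) :
    (r * (1 - 2 * (((r - 1) / P) % 2))) % (2 * P)
      = (r % P) * (1 - (r / P) % 2) + (P - r % P) * ((r / P) % 2) := by
  rcases eq_or_lt_of_le hr0 with h0 | h0
  · simp [← h0]
  have h1 : P * (r / P) + r % P = r := Int.mul_ediv_add_emod r P
  have hs0 : 0 ≤ r % P := Int.emod_nonneg _ (ne_of_gt hP)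
  have hs1 : r % P < P := Int.emod_lt_of_pos _ hP
  have hq0 : 0 ≤ r / P := Int.ediv_nonneg hr0 (le_of_lt hP)
  have hq1 : r / P < 2 := by nlinarith
  interval_cases h : r / P
  · -- q = 0 : r = r % P < P
    have hd : (r - 1) / P = 0 := Int.ediv_eq_zero_of_lt (by linarith) (by linarith)
    rw [hd]
    norm_num
    rw [Int.emod_eq_of_lt hr0 hr]
    linarith
  · -- q = 1 : r = P + s
    rcases eq_or_lt_of_le hs0 with hs | hs
    · -- s = 0, r = P
      have hd : (r - 1) / P = 0 := Int.ediv_eq_zero_of_lt (by linarith) (by linarith)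
      rw [hd]
      norm_num
      rw [Int.emod_eq_of_lt (by linarith) (by linarith)]
      linarith
    · -- s ≥ 1
      have hd : (r - 1) / P = 1 := by
        have he : r - 1 = (r % P - 1) + P * 1 := by linarith
        rw [he, Int.add_mul_ediv_left _ _ (ne_of_gt hP),
          Int.ediv_eq_zero_of_lt (by linarith) (by linarith)]
        norm_num
      rw [hd]
      have hneg : (r * (1 - 2 * (1 % 2))) = (2 * P - r) + (2 * P) * (-1) := by
        norm_num; ring
      rw [hneg, Int.add_mul_emod_self_left, Int.emod_eq_of_lt (by linarith) (by linarith)]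
      norm_num
      linarith

lemma f_eq (i : ℤ) (j : ℕ) :
    f i (j + 1) = (i % 2 ^ j) * (1 - b i (j + 1)) + (2 ^ j - i % 2 ^ j) * b i (j + 1) := by
  have hP : (0 : ℤ) < 2 ^ j := by positivity
  have hP2 : (0 : ℤ) < 2 ^ (j + 1) := by positivity
  have h2 : (2 : ℤ) ^ (j + 1) = 2 * 2 ^ j := by ring
  set r := i % 2 ^ (j + 1) with hrdef
  have hr0 : 0 ≤ r := Int.emod_nonneg _ (ne_of_gt hP2)
  have hr1 : r < 2 ^ (j + 1) := Int.emod_lt_of_pos _ hP2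
  have ht : i = r + 2 ^ (j + 1) * (i / 2 ^ (j + 1)) := by
    have := Int.mul_ediv_add_emod i (2 ^ (j + 1)); omega
  set t := i / 2 ^ (j + 1) with htdef
  have hb : b i (j + 1) = (r / 2 ^ j) % 2 := by
    show (i / 2 ^ (j + 1 - 1)) % 2 = _
    simp only [Nat.add_sub_cancel]
    rw [show i = r + 2 * 2 ^ j * t by rw [ht]; ring]
    exact ediv_emod_congr _ _ _ hP
  have hmod : i % 2 ^ j = r % 2 ^ j :=
    (Int.emod_emod_of_dvd i (pow_dvd_pow 2 (Nat.le_succ j))).symm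
  have hinner : ((i - 1) / 2 ^ j) % 2 = ((r - 1) / 2 ^ j) % 2 := by
    rw [show i - 1 = (r - 1) + 2 * 2 ^ j * t by rw [ht]; ring]
    exact ediv_emod_congr _ _ _ hP
  show (i * (1 - 2 * (((i - 1) / 2 ^ (j + 1 - 1)) % 2))) % 2 ^ (j + 1) = _
  simp only [Nat.add_sub_cancel]
  rw [hinner, hb, hmod]
  set c := (1 - 2 * (((r - 1) / 2 ^ j) % 2)) with hc
  rw [show i * c = r * c + 2 ^ (j + 1) * (t * c) by rw [ht]; ring,
    Int.add_mul_emod_self_left, hc, h2]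
  exact f_aux _ _ hP hr0 (by omega)

lemma emod_two_mul (P x : ℤ) (hP : 0 < P) :
    x % (2 * P) = ((x / P) % 2) * P + x % P := by
  have h1 : P * (x / P) + x % P = x := Int.mul_ediv_add_emod x P
  have h2 : 2 * ((x / P) / 2) + (x / P) % 2 = x / P := Int.mul_ediv_add_emod (x / P) 2
  have hs0 : 0 ≤ x % P := Int.emod_nonneg _ (ne_of_gt hP)
  have hs1 : x % P < P := Int.emod_lt_of_pos _ hP
  have hb : (x / P) % 2 = 0 ∨ (x / P) % 2 = 1 := Int.emod_two_eq_zero_or_one _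
  have key : x = ((x / P) % 2 * P + x % P) + (2 * P) * ((x / P) / 2) := by
    nlinarith [h1, h2]
  have hge : 0 ≤ (x / P) % 2 * P + x % P := by
    rcases hb with h | h <;> rw [h] <;> nlinarith
  have hlt : (x / P) % 2 * P + x % P < 2 * P := by
    rcases hb with h | h <;> rw [h] <;> nlinarith
  conv_lhs => rw [key]
  rw [Int.add_mul_emod_self_left]
  exact Int.emod_eq_of_lt hge hlt

lemma b_mod (i : ℤ) (l M : ℕ) (h1 : 1 ≤ l) (h2 : l ≤ M) : b (i % 2 ^ M) l = b i l := by
  obtain ⟨j, rfl⟩ : ∃ j, l = j + 1 := ⟨l - 1, by omega⟩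
  have hP : (0 : ℤ) < 2 ^ j := by positivity
  have hPM : (0 : ℤ) < 2 ^ M := by positivity
  have ht : i = i % 2 ^ M + 2 * 2 ^ j * (2 ^ (M - (j + 1)) * (i / 2 ^ M)) := by
    have hpow : (2 : ℤ) ^ M = 2 * 2 ^ j * 2 ^ (M - (j + 1)) := by
      rw [← pow_succ']
      rw [← pow_add]
      congr 1
      omega
    have := Int.mul_ediv_add_emod i (2 ^ M)
    linear_combination (i / 2 ^ M) * hpow - this
  show (i % 2 ^ M / 2 ^ (j + 1 - 1)) % 2 = (i / 2 ^ (j + 1 - 1)) % 2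
  simp only [Nat.add_sub_cancel]
  conv_rhs => rw [ht]
  exact (ediv_emod_congr _ _ _ hP).symm

lemma f_mod (i : ℤ) (l M : ℕ) (h1 : 1 ≤ l) (h2 : l ≤ M) : f (i % 2 ^ M) l = f i l := by
  obtain ⟨j, rfl⟩ : ∃ j, l = j + 1 := ⟨l - 1, by omega⟩
  rw [f_eq, f_eq, b_mod _ _ _ h1 h2,
    Int.emod_emod_of_dvd i (pow_dvd_pow 2 (by omega : j ≤ M))]

lemma m_odd (k : ℕ) : m (2 * k + 1) = ∑ j ∈ Finset.range (k + 1), (4 : ℤ) ^ j := by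
  have hg : (∑ j ∈ Finset.range (k + 1), (4 : ℤ) ^ j) * (4 - 1) = 4 ^ (k + 1) - 1 :=
    geom_sum_mul 4 (k + 1)
  have hpow : (2 : ℤ) ^ (2 * k + 1) = 2 * 4 ^ k := by
    rw [pow_succ', pow_mul]; norm_num
  have hneg : ((-1 : ℤ)) ^ (2 * k + 1) = -1 := Odd.neg_one_pow ⟨k, by ring⟩
  have hnum : 4 * (2 : ℤ) ^ (2 * k + 1) - (-1) ^ (2 * k + 1) - 3
      = 6 * ∑ j ∈ Finset.range (k + 1), (4 : ℤ) ^ j := by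
    rw [hpow, hneg]
    have h4 : (4 : ℤ) ^ (k + 1) = 4 * 4 ^ k := by ring
    linear_combination -2 * hg + 2 * h4
  unfold m
  rw [hnum, Int.mul_ediv_cancel_left _ (by norm_num)]

lemma m_step (k : ℕ) : m (2 * k + 3) = 2 ^ (2 * k + 2) + m (2 * k + 1) := by
  have h1 : m (2 * (k + 1) + 1) = ∑ j ∈ Finset.range (k + 2), (4 : ℤ) ^ j := m_odd (k + 1)
  have he : 2 * (k + 1) + 1 = 2 * k + 3 := by ring
  rw [he] at h1
  rw [h1, m_odd k, Finset.sum_range_succ]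
  have : (4 : ℤ) ^ (k + 1) = 2 ^ (2 * k + 2) := by
    rw [show (4:ℤ) = 2^2 by norm_num, ← pow_mul]; ring_nf
  rw [this]; ring

lemma m_pos (k : ℕ) : 1 ≤ m (2 * k + 1) := by
  rw [m_odd]
  calc (1 : ℤ) = ∑ j ∈ Finset.range 1, (4 : ℤ) ^ j := by simp
  _ ≤ _ := Finset.sum_le_sum_of_subset_of_nonneg
      (Finset.range_subset_range.2 (by omega)) (by intros; positivity)

def Cond (n : ℕ) (i : ℤ) : Prop :=
  (∀ j : ℕ, 1 ≤ j → j ≤ (n - 1) / 2 → b i (2 * j + 1) + b i (2 * j) = 1) ∧ b i 1 = 1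

lemma S_split (i : ℤ) (k : ℕ) :
    S i (2 * k + 3) = S (i % 2 ^ (2 * k + 1)) (2 * k + 1) + (f i (2 * k + 2) + f i (2 * k + 3)) := by
  unfold S
  rw [show 2 * k + 3 = (2 * k + 2) + 1 from rfl, Finset.sum_Icc_succ_top (by omega),
    show 2 * k + 2 = (2 * k + 1) + 1 from rfl, Finset.sum_Icc_succ_top (by omega)]
  have hcongr : ∀ x ∈ Finset.Icc 1 (2 * k + 1),
      f (i % 2 ^ (2 * k + 1)) x = f i x := by
    intro x hx
    simp only [Finset.mem_Icc] at hx
    exact f_mod i x (2 * k + 1) hx.1 hx.2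
  rw [Finset.sum_congr rfl hcongr]
  ring

lemma b_cases (i : ℤ) (l : ℕ) : b i l = 0 ∨ b i l = 1 := Int.emod_two_eq_zero_or_one _

lemma b_one (i : ℤ) : b i 1 = i % 2 := by unfold b; norm_num

lemma cond_step (k : ℕ) (i : ℤ) :
    Cond (2 * k + 3) i ↔
      (b i (2 * k + 3) + b i (2 * k + 2) = 1 ∧ Cond (2 * k + 1) (i % 2 ^ (2 * k + 1))) := by
  unfold Cond
  simp only [show (2 * k + 3 - 1) / 2 = k + 1 from by omega,
    show (2 * k + 1 - 1) / 2 = k from by omega]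
  constructor
  · rintro ⟨h1, h2⟩
    refine ⟨?_, ?_, ?_⟩
    · have := h1 (k + 1) (by omega) (by omega)
      rw [show 2 * (k + 1) + 1 = 2 * k + 3 from by ring, show 2 * (k + 1) = 2 * k + 2 from by ring] at this
      exact this
    · intro j hj1 hj2
      rw [b_mod i (2 * j + 1) (2 * k + 1) (by omega) (by omega),
        b_mod i (2 * j) (2 * k + 1) (by omega) (by omega)]
      exact h1 j hj1 (by omega)
    · rw [b_mod i 1 (2 * k + 1) (by omega) (by omega)]
      exact h2
  · rintro ⟨htop, h1, h2⟩
    constructor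
    · intro j hj1 hj2
      rcases eq_or_lt_of_le hj2 with he | hl
      · rw [he, show 2 * (k + 1) + 1 = 2 * k + 3 from by ring,
          show 2 * (k + 1) = 2 * k + 2 from by ring]
        exact htop
      · have := h1 j hj1 (by omega)
        rwa [b_mod i (2 * j + 1) (2 * k + 1) (by omega) (by omega),
          b_mod i (2 * j) (2 * k + 1) (by omega) (by omega)] at this
    · rwa [b_mod i 1 (2 * k + 1) (by omega) (by omega)] at h2

lemma b_succ (i : ℤ) (j : ℕ) : b i (j + 1) = (i / 2 ^ j) % 2 := by
  unfold b; norm_num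

lemma main (k : ℕ) : ∀ i : ℤ, 0 ≤ i → i < 2 ^ (2 * k + 1) →
    S i (2 * k + 1) ≤ m (2 * k + 1) ∧
      (S i (2 * k + 1) = m (2 * k + 1) ↔ Cond (2 * k + 1) i) := by
  induction k with
  | zero =>
    intro i h0 h1
    have hm1 : m 1 = 1 := by norm_num [m]
    have hS : S i 1 = i % 2 := by
      have h : S i 1 = f i 1 := by simp [S]
      have h2 := f_eq i 0
      norm_num at h2
      rw [h, h2, b_one]
    have hc : Cond 1 i ↔ i % 2 = 1 := by
      unfold Cond
      rw [b_one]
      constructor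
      · exact fun h => h.2
      · exact fun h => ⟨fun j hj1 hj2 => absurd hj2 (by omega), h⟩
    refine ⟨?_, ?_⟩
    · rw [hS, hm1]; omega
    · rw [hS, hm1, hc]
  | succ k ih =>
    intro i h0 h1
    have hsh : 2 * (k + 1) + 1 = 2 * k + 3 := by ring
    rw [hsh] at h1 ⊢
    have hP : (0 : ℤ) < 2 ^ (2 * k + 1) := by positivity
    have hr0 : 0 ≤ i % 2 ^ (2 * k + 1) := Int.emod_nonneg _ (ne_of_gt hP)
    have hr1 : i % 2 ^ (2 * k + 1) < 2 ^ (2 * k + 1) := Int.emod_lt_of_pos _ hP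
    obtain ⟨ihle, ihiff⟩ := ih (i % 2 ^ (2 * k + 1)) hr0 hr1
    have hsplit := S_split i k
    have hm := m_step k
    have hf2 := f_eq i (2 * k + 1)
    have hf3 := f_eq i (2 * k + 2)
    rw [show 2 * k + 1 + 1 = 2 * k + 2 from by omega] at hf2
    rw [show 2 * k + 2 + 1 = 2 * k + 3 from by omega] at hf3
    have hb2 : b i (2 * k + 2) = (i / 2 ^ (2 * k + 1)) % 2 := by
      rw [show 2 * k + 2 = (2 * k + 1) + 1 from by omega, b_succ]
    have hs2 : i % 2 ^ (2 * k + 2) = b i (2 * k + 2) * 2 ^ (2 * k + 1) + i % 2 ^ (2 * k + 1) := by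
      have h := emod_two_mul (2 ^ (2 * k + 1)) i hP
      rw [show (2 : ℤ) * 2 ^ (2 * k + 1) = 2 ^ (2 * k + 2) from by ring] at h
      rw [h, ← hb2]
    have hodd : S (i % 2 ^ (2 * k + 1)) (2 * k + 1) = m (2 * k + 1) → 1 ≤ i % 2 ^ (2 * k + 1) := by
      intro h
      have hb1 := (ihiff.1 h).2
      rw [b_one] at hb1
      omega
    rcases b_cases i (2 * k + 3) with hB1 | hB1 <;> rcases b_cases i (2 * k + 2) with hB2 | hB2
    · -- (0,0)
      have htop : f i (2 * k + 2) + f i (2 * k + 3) = 2 * (i % 2 ^ (2 * k + 1)) := by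
        rw [hf2, hf3, hs2, hB1, hB2]; ring
      have hlt : S i (2 * k + 3) < m (2 * k + 3) := by
        rw [hsplit, htop, hm]
        have hpw : (2 : ℤ) ^ (2 * k + 2) = 2 * 2 ^ (2 * k + 1) := by ring
        have hmp := m_pos k
        linarith
      refine ⟨le_of_lt hlt, ⟨fun h => absurd h (ne_of_lt hlt), fun hC => ?_⟩⟩
      rw [cond_step] at hC
      rw [hB1, hB2] at hC
      norm_num at hC
    · -- (0,1)
      have htop : f i (2 * k + 2) + f i (2 * k + 3) = 2 ^ (2 * k + 2) := by
        rw [hf2, hf3, hs2, hB1, hB2]; ring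
      refine ⟨by rw [hsplit, htop, hm]; linarith, ?_⟩
      rw [hsplit, htop, hm, cond_step]
      constructor
      · intro h
        exact ⟨by rw [hB1, hB2]; norm_num, ihiff.1 (by linarith)⟩
      · rintro ⟨-, hc⟩
        have := ihiff.2 hc
        linarith
    · -- (1,0)
      have htop : f i (2 * k + 2) + f i (2 * k + 3) = 2 ^ (2 * k + 2) := by
        rw [hf2, hf3, hs2, hB1, hB2]; ring
      refine ⟨by rw [hsplit, htop, hm]; linarith, ?_⟩
      rw [hsplit, htop, hm, cond_step]
      constructor
      · intro h
        exact ⟨by rw [hB1, hB2]; norm_num, ihiff.1 (by linarith)⟩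
      · rintro ⟨-, hc⟩
        have := ihiff.2 hc
        linarith
    · -- (1,1)
      have htop : f i (2 * k + 2) + f i (2 * k + 3)
          = 2 ^ (2 * k + 2) - 2 * (i % 2 ^ (2 * k + 1)) := by
        rw [hf2, hf3, hs2, hB1, hB2]; ring
      have hlt : S i (2 * k + 3) < m (2 * k + 3) := by
        rw [hsplit, htop, hm]
        rcases lt_or_eq_of_le ihle with h | h
        · linarith
        · have := hodd h
          linarith
      refine ⟨le_of_lt hlt, ⟨fun h => absurd h (ne_of_lt hlt), fun hC => ?_⟩⟩
      rw [cond_step] at hC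
      rw [hB1, hB2] at hC
      norm_num at hC


theorem maximizers_odd (n : ℕ) (hn : 1 ≤ n) (hno : Odd n)
    (i : ℤ) (hi0 : 0 < i) (hiN : i < 2 ^ n) :
    S i n = m n ↔
      ((∀ j : ℕ, 1 ≤ j → j ≤ (n - 1) / 2 → b i (2 * j + 1) + b i (2 * j) = 1) ∧
       b i 1 = 1) := by
  obtain ⟨k, rfl⟩ : ∃ k, n = 2 * k + 1 := by
    rcases hno with ⟨t, ht⟩
    exact ⟨t, by omega⟩
  exact (main k i (le_of_lt hi0) hiN).2
end

section
/- For N = 2^n with n even, the number of integers i with 0 < i < N such that S(i,N) = m(N) is 2^(n/2 - 1) · 3 (i.e., each of the first n/2 - 1 pairs has 2 choices and the last pair has 3 choices). -/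
lemma emod_pow_eq {M : ℤ} (a r q : ℤ) (h : a = r + M * q) (h0 : 0 ≤ r) (h1 : r < M) :
    a % M = r := by
  subst h; rw [Int.add_mul_emod_self_left]; exact Int.emod_eq_of_lt h0 h1

lemma f_shift (n k : ℕ) (j c : ℤ) (hk1 : 1 ≤ k) (hkn : k ≤ n) :
    f (j + c * 2 ^ n) k = f j k := by
  unfold f
  have hpow : (2:ℤ) ^ (n - k + 1) * 2 ^ (k - 1) = 2 ^ n := by
    rw [← pow_add]; congr 1; omega
  have h1 : j + c * 2 ^ n - 1 = (j - 1) + (c * 2 ^ (n - k + 1)) * 2 ^ (k - 1) := by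
    rw [mul_assoc, hpow]; ring
  rw [h1, Int.add_mul_ediv_right _ _ (by positivity)]
  have h2 : (j - 1) / 2 ^ (k - 1) + c * 2 ^ (n - k + 1)
      = (j - 1) / 2 ^ (k - 1) + 2 * (c * 2 ^ (n - k)) := by
    rw [pow_succ]; ring
  rw [h2, Int.add_mul_emod_self_left]
  set s := 1 - 2 * ((j - 1) / 2 ^ (k - 1) % 2) with hs
  have hpow2 : (2:ℤ) ^ (n - k) * 2 ^ k = 2 ^ n := by rw [← pow_add]; congr 1; omega
  have h3 : (j + c * 2 ^ n) * s = j * s + (2:ℤ) ^ k * (c * 2 ^ (n - k) * s) := by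
    rw [show (2:ℤ)^n = 2^(n-k) * 2^k from hpow2.symm]; ring
  rw [h3, Int.add_mul_emod_self_left]

lemma S_shift (n : ℕ) (j c : ℤ) : S (j + c * 2 ^ n) n = S j n := by
  unfold S
  refine Finset.sum_congr rfl fun k hk => ?_
  rw [Finset.mem_Icc] at hk
  exact f_shift n k j c hk.1 hk.2

lemma S_split_s11 (j : ℤ) (n : ℕ) :
    S j (n + 2) = S j n + f j (n + 1) + f j (n + 2) := by
  unfold S
  rw [show n + 2 = (n + 1) + 1 from rfl, Finset.sum_Icc_succ_top (by omega),
    Finset.sum_Icc_succ_top (by omega)]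

lemma topdiv (n : ℕ) (j c : ℤ) (h0 : 0 < j) (h1 : j ≤ 2 ^ n) :
    (j + c * 2 ^ n - 1) / 2 ^ n = c := by
  have h : j + c * 2 ^ n - 1 = (j - 1) + c * 2 ^ n := by ring
  rw [h, Int.add_mul_ediv_right _ _ (by positivity),
    Int.ediv_eq_zero_of_lt (by omega) (by omega), zero_add]

lemma S_pow (n : ℕ) : S (2 ^ n) n = 0 := by
  unfold S
  refine Finset.sum_eq_zero fun k hk => ?_
  rw [Finset.mem_Icc] at hk
  have : (2:ℤ) ^ k ∣ 2 ^ n * (1 - 2 * ((2 ^ n - 1) / 2 ^ (k - 1) % 2)) :=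
    dvd_mul_of_dvd_left (pow_dvd_pow 2 hk.2) _
  unfold f
  exact Int.emod_eq_zero_of_dvd this

lemma ediv_pow_eq {M : ℤ} (a r q : ℤ) (h : a = r + q * M) (h0 : 0 ≤ r) (h1 : r < M) :
    a / M = q := by
  subst h
  rw [Int.add_mul_ediv_right _ _ (by omega : M ≠ 0), Int.ediv_eq_zero_of_lt h0 h1, zero_add]

lemma f_top1 (n : ℕ) (i j c r q : ℤ) (hi : i = j + c * 2 ^ n) (h0 : 0 < j) (h1 : j ≤ 2 ^ n)
    (hr : i * (1 - 2 * (c % 2)) = r + 2 ^ (n + 1) * q) (hr0 : 0 ≤ r) (hr1 : r < 2 ^ (n + 1)) :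
    f i (n + 1) = r := by
  unfold f
  rw [Nat.add_sub_cancel, hi, topdiv n j c h0 h1, ← hi]
  exact emod_pow_eq _ r q hr hr0 hr1

lemma f_top2 (n : ℕ) (i d r q : ℤ)
    (hdiv : (i - 1) / 2 ^ (n + 1) = d)
    (hr : i * (1 - 2 * (d % 2)) = r + 2 ^ (n + 2) * q)
    (hr0 : 0 ≤ r) (hr1 : r < 2 ^ (n + 2)) :
    f i (n + 2) = r := by
  unfold f
  rw [show n + 2 - 1 = n + 1 from rfl, hdiv]
  exact emod_pow_eq _ r q hr hr0 hr1

lemma Sval0 (n : ℕ) (j : ℤ) (h0 : 0 < j) (h1 : j ≤ 2 ^ n) :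
    S j (n + 2) = S j n + 2 * j := by
  have hP : (0:ℤ) < 2 ^ n := by positivity
  have e1 : (2:ℤ) ^ (n + 1) = 2 * 2 ^ n := by ring
  have e2 : (2:ℤ) ^ (n + 2) = 4 * 2 ^ n := by ring
  have hf1 : f j (n + 1) = j :=
    f_top1 n j j 0 j 0 (by ring) h0 h1 (by norm_num) (by linarith) (by linarith)
  have hf2 : f j (n + 2) = j :=
    f_top2 n j 0 j 0 (ediv_pow_eq _ (j - 1) 0 (by ring) (by linarith) (by linarith))
      (by norm_num) (by linarith) (by linarith)
  rw [S_split_s11, hf1, hf2]; ring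

lemma Sval1 (n : ℕ) (j : ℤ) (h0 : 0 < j) (h1 : j ≤ 2 ^ n) :
    S (j + 2 ^ n) (n + 2) = S j n + 2 ^ (n + 1) := by
  have hP : (0:ℤ) < 2 ^ n := by positivity
  have e1 : (2:ℤ) ^ (n + 1) = 2 * 2 ^ n := by ring
  have e2 : (2:ℤ) ^ (n + 2) = 4 * 2 ^ n := by ring
  have hsh : S (j + 2 ^ n) n = S j n := by simpa using S_shift n j 1
  have hf1 : f (j + 2 ^ n) (n + 1) = 2 ^ n - j :=
    f_top1 n (j + 2 ^ n) j 1 (2 ^ n - j) (-1) (by ring) h0 h1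
      (by simp only [Int.one_emod_two, show ((2:ℤ)%2)=0 from by norm_num, show ((3:ℤ)%2)=1 from by norm_num, e1]; ring) (by linarith) (by linarith)
  have hf2 : f (j + 2 ^ n) (n + 2) = j + 2 ^ n :=
    f_top2 n (j + 2 ^ n) 0 (j + 2 ^ n) 0
      (ediv_pow_eq _ (j + 2 ^ n - 1) 0 (by ring) (by linarith) (by linarith))
      (by norm_num) (by linarith) (by linarith)
  rw [S_split_s11, hf1, hf2, hsh]; ring

lemma Sval2 (n : ℕ) (j : ℤ) (h0 : 0 < j) (h1 : j ≤ 2 ^ n) :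
    S (j + 2 * 2 ^ n) (n + 2) = S j n + 2 ^ (n + 1) := by
  have hP : (0:ℤ) < 2 ^ n := by positivity
  have e1 : (2:ℤ) ^ (n + 1) = 2 * 2 ^ n := by ring
  have e2 : (2:ℤ) ^ (n + 2) = 4 * 2 ^ n := by ring
  have hsh : S (j + 2 * 2 ^ n) n = S j n := by simpa using S_shift n j 2
  have hf1 : f (j + 2 * 2 ^ n) (n + 1) = j :=
    f_top1 n (j + 2 * 2 ^ n) j 2 j 1 (by ring) h0 h1
      (by simp only [Int.one_emod_two, show ((2:ℤ)%2)=0 from by norm_num, show ((3:ℤ)%2)=1 from by norm_num, e1]; ring) (by linarith) (by linarith)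
  have hf2 : f (j + 2 * 2 ^ n) (n + 2) = 2 ^ (n + 1) - j :=
    f_top2 n (j + 2 * 2 ^ n) 1 (2 ^ (n + 1) - j) (-1)
      (ediv_pow_eq _ (j - 1) 1 (by rw [e1]; ring) (by linarith) (by linarith))
      (by simp only [Int.one_emod_two, e1, e2]; ring) (by linarith) (by linarith)
  rw [S_split_s11, hf1, hf2, hsh]; ring

lemma Sval3 (n : ℕ) (j : ℤ) (h0 : 0 < j) (h1 : j ≤ 2 ^ n) :
    S (j + 3 * 2 ^ n) (n + 2) = S j n + 2 ^ (n + 1) - 2 * j := by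
  have hP : (0:ℤ) < 2 ^ n := by positivity
  have e1 : (2:ℤ) ^ (n + 1) = 2 * 2 ^ n := by ring
  have e2 : (2:ℤ) ^ (n + 2) = 4 * 2 ^ n := by ring
  have hsh : S (j + 3 * 2 ^ n) n = S j n := by simpa using S_shift n j 3
  have hf1 : f (j + 3 * 2 ^ n) (n + 1) = 2 ^ n - j :=
    f_top1 n (j + 3 * 2 ^ n) j 3 (2 ^ n - j) (-2) (by ring) h0 h1
      (by simp only [Int.one_emod_two, show ((2:ℤ)%2)=0 from by norm_num, show ((3:ℤ)%2)=1 from by norm_num, e1]; ring) (by linarith) (by linarith)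
  have hf2 : f (j + 3 * 2 ^ n) (n + 2) = 2 ^ n - j :=
    f_top2 n (j + 3 * 2 ^ n) 1 (2 ^ n - j) (-1)
      (ediv_pow_eq _ (j - 1 + 2 ^ n) 1 (by rw [e1]; ring) (by linarith) (by linarith))
      (by simp only [Int.one_emod_two, e2]; ring) (by linarith) (by linarith)
  rw [S_split_s11, hf1, hf2, hsh]; ring

lemma m_exists (n : ℕ) (hn2 : 2 ≤ n) (hne : Even n) :
    ∃ t : ℤ, 1 ≤ t ∧ (2:ℤ) ^ n = 3 * t + 1 ∧ m n = 2 * t := by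
  obtain ⟨k, hk⟩ := hne
  have hdvd : (3:ℤ) ∣ 2 ^ n - 1 := by
    have : (2:ℤ) ^ n = 4 ^ k := by rw [hk, ← two_mul, pow_mul]; norm_num
    rw [this]
    simpa using sub_dvd_pow_sub_pow (4:ℤ) 1 k
  obtain ⟨t, ht⟩ := hdvd
  have hn4 : (4:ℤ) ≤ 2 ^ n := by
    calc (4:ℤ) = 2 ^ 2 := by norm_num
    _ ≤ 2 ^ n := pow_le_pow_right₀ (by norm_num) hn2
  refine ⟨t, by omega, by omega, ?_⟩
  unfold m
  rw [Even.neg_one_pow ⟨k, hk⟩]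
  rw [show 4 * (2:ℤ) ^ n - 1 - 3 = 6 * (2 * t) from by linarith]
  exact Int.mul_ediv_cancel_left _ (by norm_num)

lemma key : ∀ k : ℕ,
    (∀ i : ℤ, 0 < i → i < 2 ^ (2 * k + 2) → S i (2 * k + 2) ≤ m (2 * k + 2)) ∧
    ((Finset.Ioo (0:ℤ) (2 ^ (2 * k + 2))).filter
      (fun i => S i (2 * k + 2) = m (2 * k + 2))).card = 2 ^ k * 3 := by
  intro k
  induction k with
  | zero => exact ⟨by decide, by decide⟩
  | succ k ih =>
    obtain ⟨IH1, IH2⟩ := ih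
    set n := 2 * k + 2 with hn
    simp only [show 2 * (k + 1) + 2 = n + 2 from by omega]
    have hP : (0:ℤ) < 2 ^ n := by positivity
    have e1 : (2:ℤ) ^ (n + 1) = 2 * 2 ^ n := by ring
    have e2 : (2:ℤ) ^ (n + 2) = 4 * 2 ^ n := by ring
    obtain ⟨t, ht1, ht2, ht3⟩ := m_exists n (by omega) ⟨k + 1, by omega⟩
    obtain ⟨t', ht1', ht2', ht3'⟩ := m_exists (n + 2) (by omega) ⟨k + 2, by omega⟩
    have hm2 : (2:ℤ) ≤ m n := by linarith
    have hstep : m (n + 2) = m n + 2 ^ (n + 1) := by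
      rw [e2] at ht2'; linarith
    have hboundle : ∀ j : ℤ, 0 < j → j ≤ 2 ^ n → S j n ≤ m n := by
      intro j h0 h1
      rcases eq_or_lt_of_le h1 with h | h
      · rw [h, S_pow]; linarith
      · exact IH1 j h0 h
    constructor
    · intro i h0 h1
      rw [e2] at h1
      rcases le_or_gt i (2 ^ n) with hc | hc
      · rw [Sval0 n i h0 hc]
        have := hboundle i h0 hc; linarith
      rcases le_or_gt i (2 * 2 ^ n) with hc2 | hc2
      · have hv := Sval1 n (i - 2 ^ n) (by linarith) (by linarith)
        rw [show i - 2 ^ n + 2 ^ n = i from by ring] at hv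
        rw [hv]
        have := hboundle (i - 2 ^ n) (by linarith) (by linarith); linarith
      rcases le_or_gt i (3 * 2 ^ n) with hc3 | hc3
      · have hv := Sval2 n (i - 2 * 2 ^ n) (by linarith) (by linarith)
        rw [show i - 2 * 2 ^ n + 2 * 2 ^ n = i from by ring] at hv
        rw [hv]
        have := hboundle (i - 2 * 2 ^ n) (by linarith) (by linarith); linarith
      · have hv := Sval3 n (i - 3 * 2 ^ n) (by linarith) (by linarith)
        rw [show i - 3 * 2 ^ n + 3 * 2 ^ n = i from by ring] at hv
        rw [hv]
        have := hboundle (i - 3 * 2 ^ n) (by linarith) (by linarith); linarith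
    · have hset : (Finset.Ioo (0:ℤ) (2 ^ (n + 2))).filter
          (fun i => S i (n + 2) = m (n + 2))
          = ((Finset.Ioo (0:ℤ) (2 ^ n)).filter (fun i => S i n = m n)).image (· + 2 ^ n)
            ∪ ((Finset.Ioo (0:ℤ) (2 ^ n)).filter (fun i => S i n = m n)).image
                (· + 2 * 2 ^ n) := by
        ext i
        simp only [Finset.mem_filter, Finset.mem_Ioo, Finset.mem_union, Finset.mem_image]
        constructor
        · rintro ⟨⟨hi0, hi1⟩, hS⟩
          rw [e2] at hi1
          rcases le_or_gt i (2 ^ n) with hc | hc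
          · exfalso
            rw [Sval0 n i hi0 hc] at hS
            rcases eq_or_lt_of_le hc with h | h
            · rw [h, S_pow] at hS; linarith
            · have := IH1 i hi0 h; linarith
          rcases le_or_gt i (2 * 2 ^ n) with hc2 | hc2
          · have hv := Sval1 n (i - 2 ^ n) (by linarith) (by linarith)
            rw [show i - 2 ^ n + 2 ^ n = i from by ring] at hv
            rw [hv] at hS
            have heq : S (i - 2 ^ n) n = m n := by linarith
            rcases eq_or_lt_of_le (show i - 2 ^ n ≤ 2 ^ n from by linarith) with h | h
            · exfalso; rw [h, S_pow] at heq; linarith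
            · exact Or.inl ⟨i - 2 ^ n, ⟨⟨by linarith, h⟩, heq⟩, by ring⟩
          rcases le_or_gt i (3 * 2 ^ n) with hc3 | hc3
          · have hv := Sval2 n (i - 2 * 2 ^ n) (by linarith) (by linarith)
            rw [show i - 2 * 2 ^ n + 2 * 2 ^ n = i from by ring] at hv
            rw [hv] at hS
            have heq : S (i - 2 * 2 ^ n) n = m n := by linarith
            rcases eq_or_lt_of_le (show i - 2 * 2 ^ n ≤ 2 ^ n from by linarith) with h | h
            · exfalso; rw [h, S_pow] at heq; linarith
            · exact Or.inr ⟨i - 2 * 2 ^ n, ⟨⟨by linarith, h⟩, heq⟩, by ring⟩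
          · exfalso
            have hv := Sval3 n (i - 3 * 2 ^ n) (by linarith) (by linarith)
            rw [show i - 3 * 2 ^ n + 3 * 2 ^ n = i from by ring] at hv
            rw [hv] at hS
            have := hboundle (i - 3 * 2 ^ n) (by linarith) (by linarith); linarith
        · rintro (⟨j, ⟨⟨hj0, hj1⟩, hSj⟩, rfl⟩ | ⟨j, ⟨⟨hj0, hj1⟩, hSj⟩, rfl⟩)
          · refine ⟨⟨by linarith, by linarith⟩, ?_⟩
            rw [Sval1 n j hj0 (le_of_lt hj1), hSj, hstep]
          · refine ⟨⟨by linarith, by linarith⟩, ?_⟩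
            rw [Sval2 n j hj0 (le_of_lt hj1), hSj, hstep]
      rw [hset]
      have hdisj : Disjoint
          (((Finset.Ioo (0:ℤ) (2 ^ n)).filter (fun i => S i n = m n)).image (· + 2 ^ n))
          (((Finset.Ioo (0:ℤ) (2 ^ n)).filter (fun i => S i n = m n)).image
            (· + 2 * 2 ^ n)) := by
        rw [Finset.disjoint_left]
        intro a ha hb
        simp only [Finset.mem_image, Finset.mem_filter, Finset.mem_Ioo] at ha hb
        obtain ⟨j, ⟨⟨_, hj1⟩, _⟩, rfl⟩ := ha
        obtain ⟨j', ⟨⟨hj0', _⟩, _⟩, hj'⟩ := hb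
        linarith
      rw [Finset.card_union_of_disjoint hdisj,
        Finset.card_image_of_injective _ (add_left_injective _),
        Finset.card_image_of_injective _ (add_left_injective _), IH2]
      ring


theorem card_maximizers_even (n : ℕ) (hn2 : 2 ≤ n) (hne : Even n) :
    ((Finset.Ioo (0 : ℤ) (2 ^ n)).filter (fun i => S i n = m n)).card =
      2 ^ (n / 2 - 1) * 3 := by
  obtain ⟨r, hr⟩ := hne
  have hk : n = 2 * (r - 1) + 2 := by omega
  have h := (key (r - 1)).2
  rw [← hk] at h
  simpa [show n / 2 - 1 = r - 1 from by omega] using h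
end
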